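/- Let A ≪ B in 𝕀ℝ and let F : 𝕀_{[A,B]} → 𝕀ℝ be continuous with respect to the Moore metric d_M. Define the left and right spectra F_l, F_r : [a̲,b̲] → ℝ by F_l(x) = π₁ F([x, ā + ((b̄−ā)/(b̲−a̲))(x−a̲)]) and F_r(x) = π₂ F([x, ā + ((b̄−ā)/(b̲−a̲))(x−a̲)]). Then ∫̲_A^B F(X)dX = [∫_{a̲}^{b̲} F_l(x)dx, ∫_{a̲}^{b̲} F_r(x)dx] · (d_M(A,B)/(b̲−a̲)) and ∫̄_A^B F(X)dX equals the same interval. -/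

import Mathlib

/-- `𝕀ℝ`: the set of nonempty closed bounded real intervals, identified with
pairs `(lo, hi) ∈ ℝ × ℝ` with `lo ≤ hi`.  The subtype order inherited from the
product order on `ℝ × ℝ` is exactly the Kulisch–Miranker order, and the
inherited metric (sup metric of `ℝ × ℝ`) is exactly the Moore metric `d_M`. -/
abbrev IR : Type := {p : ℝ × ℝ // p.1 ≤ p.2}

namespace IR

/-- Left endpoint projection `π₁`. -/
def lo (A : IR) : ℝ := A.val.1

/-- Right endpoint projection `π₂`. -/
def hi (A : IR) : ℝ := A.val.2

/-- The strict Kulisch–Miranker order `A ≪ B`. -/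
def sll (A B : IR) : Prop := lo A < lo B ∧ hi A < hi B

/-- The Moore metric `d_M`. -/
noncomputable def dM (A B : IR) : ℝ := max |lo B - lo A| |hi B - hi A|

/-- `𝕀_{[A,B]} = {X ∈ 𝕀ℝ : A ≤ X ≤ B}`. -/
def box (A B : IR) : Set IR := {X : IR | A ≤ X ∧ X ≤ B}

/-- The interval `[u,v]` (with a junk degenerate value if `u > v`). -/
noncomputable def mkI (u v : ℝ) : IR := if h : u ≤ v then ⟨(u, v), h⟩ else ⟨(u, u), le_rfl⟩

/-- The point `A + t(B - A)` on the segment from `A` to `B`. -/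
noncomputable def seg (A B : IR) (t : ℝ) : IR :=
  mkI (lo A + t * (lo B - lo A)) (hi A + t * (hi B - hi A))

/-- Componentwise infimum of a set of intervals, as a pair of reals. -/
noncomputable def infS (S : Set IR) : ℝ × ℝ := (sInf (lo '' S), sInf (hi '' S))

/-- Componentwise supremum of a set of intervals, as a pair of reals. -/
noncomputable def supS (S : Set IR) : ℝ × ℝ := (sSup (lo '' S), sSup (hi '' S))

/-- A partition `A = P₀ ≪ P₁ ≪ ⋯ ≪ P_N = B` of `𝕀_{[A,B]}`, described by its
parameters `0 = t₀ < t₁ < ⋯ < t_N = 1` (so that `P_k = A + t_k (B - A)`). -/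
structure Partition where
  n : ℕ
  npos : 0 < n
  t : ℕ → ℝ
  t0 : t 0 = 0
  tn : t n = 1
  mono : ∀ i < n, t i < t (i + 1)

/-- The set of parameters of a partition. -/
def Partition.pts (P : Partition) : Set ℝ := P.t '' Set.Iic P.n

/-- The set of points `P_k = A + t_k(B-A)` of a partition of `𝕀_{[A,B]}`. -/
noncomputable def Partition.ipts (A B : IR) (P : Partition) : Set IR :=
  (fun i => seg A B (P.t i)) '' Set.Iic P.n

/-- Lower Riemann sum `σ(F, 𝒫)` (as a pair of reals; interval sums are
componentwise and `λ • [u,v] = [λu, λv]` for the scalars `λ = d_M ≥ 0`). -/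
noncomputable def lowerSum (A B : IR) (F : IR → IR) (P : Partition) : ℝ × ℝ :=
  ∑ k ∈ Finset.range P.n,
    dM (seg A B (P.t k)) (seg A B (P.t (k + 1))) •
      infS (F '' box (seg A B (P.t k)) (seg A B (P.t (k + 1))))

/-- Upper Riemann sum `Σ(F, 𝒫)`. -/
noncomputable def upperSum (A B : IR) (F : IR → IR) (P : Partition) : ℝ × ℝ :=
  ∑ k ∈ Finset.range P.n,
    dM (seg A B (P.t k)) (seg A B (P.t (k + 1))) •
      supS (F '' box (seg A B (P.t k)) (seg A B (P.t (k + 1))))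

/-- The lower integral `∫̲_A^B F(X)dX`: componentwise supremum of the lower
Riemann sums over all partitions. -/
noncomputable def lowerInt (A B : IR) (F : IR → IR) : ℝ × ℝ :=
  (sSup (Set.range fun P : Partition => (lowerSum A B F P).1),
   sSup (Set.range fun P : Partition => (lowerSum A B F P).2))

/-- The upper integral `∫̄_A^B F(X)dX`: componentwise infimum of the upper
Riemann sums over all partitions. -/
noncomputable def upperInt (A B : IR) (F : IR → IR) : ℝ × ℝ :=
  (sInf (Set.range fun P : Partition => (upperSum A B F P).1),
   sInf (Set.range fun P : Partition => (upperSum A B F P).2))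

/-- `F` is bounded on `𝕀_{[A,B]}` (order bounded, equivalently metrically
bounded). -/
def BoundedOn (F : IR → IR) (A B : IR) : Prop :=
  ∃ C D : IR, ∀ X ∈ box A B, C ≤ F X ∧ F X ≤ D

end IR

namespace IR

/-- The left spectrum `F_l(x) = π₁ F([x, ā + ((b̄−ā)/(b̲−a̲))(x−a̲)])`. -/
noncomputable def specL (A B : IR) (F : IR → IR) (x : ℝ) : ℝ :=
  lo (F (mkI x (hi A + ((hi B - hi A) / (lo B - lo A)) * (x - lo A))))

/-- The right spectrum `F_r(x) = π₂ F([x, ā + ((b̄−ā)/(b̲−a̲))(x−a̲)])`. -/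
noncomputable def specR (A B : IR) (F : IR → IR) (x : ℝ) : ℝ :=
  hi (F (mkI x (hi A + ((hi B - hi A) / (lo B - lo A)) * (x - lo A))))

end IR

/-!
Parametrise the segment from `A` to `B` by `t ∈ [0,1]`. The cell `𝕀_{[P_k,P_{k+1}]}` of a
partition contains the segment points with `t ∈ [t_k, t_{k+1}]`, and its Moore length is
`(t_{k+1} - t_k) · d_M(A,B)`. Hence every lower sum of a continuous real functional `g` lies below
`d_M(A,B) ∫₀¹ g(A + t(B-A)) dt` and every upper sum above it. On a fine uniform partition every cell
has Moore diameter below the modulus of uniform continuity of `g` on the compact set `𝕀_{[A,B]}`, so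
upper and lower sums are arbitrarily close, and both the supremum of the lower sums and the infimum
of the upper sums equal that integral. Applying this to `π₁ ∘ F` and `π₂ ∘ F`, and substituting
`x = a̲ + t(b̲ - a̲)`, which maps the segment point to the argument of the spectra, gives the theorem.
-/

open Set

theorem csSup_range_eq_and_csInf_range_eq_of_sub_le {ι : Type*} [Nonempty ι] {l u : ι → ℝ}
    {v : ℝ} (hl : ∀ i, l i ≤ v) (hu : ∀ i, v ≤ u i) (hgap : ∀ ε > 0, ∃ i, u i - l i ≤ ε) :
    sSup (range l) = v ∧ sInf (range u) = v := by
  have hl_bdd : BddAbove (range l) := ⟨v, forall_mem_range.2 hl⟩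
  have hu_bdd : BddBelow (range u) := ⟨v, forall_mem_range.2 hu⟩
  constructor
  · refine le_antisymm (csSup_le (range_nonempty l) (forall_mem_range.2 hl)) ?_
    refine le_of_forall_pos_le_add fun ε hε => ?_
    obtain ⟨i, hi⟩ := hgap ε hε
    linarith [hu i, le_csSup hl_bdd (mem_range_self i)]
  · refine le_antisymm ?_ (le_csInf (range_nonempty u) (forall_mem_range.2 hu))
    refine le_of_forall_pos_le_add fun ε hε => ?_
    obtain ⟨i, hi⟩ := hgap ε hε
    linarith [hl i, csInf_le hu_bdd (mem_range_self i)]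

theorem mul_csInf_le_integral_and_integral_le_mul_csSup {f : ℝ → ℝ} {a b : ℝ} {S : Set ℝ}
    (hab : a ≤ b) (hf : IntervalIntegrable f MeasureTheory.volume a b)
    (hS : Bornology.IsBounded S) (hfS : ∀ x ∈ Icc a b, f x ∈ S) :
    (b - a) * sInf S ≤ ∫ x in a..b, f x ∧ ∫ x in a..b, f x ≤ (b - a) * sSup S := by
  have hconst (c : ℝ) : (b - a) * c = ∫ _ in a..b, c := by simp
  constructor
  · rw [hconst]
    exact intervalIntegral.integral_mono_on hab intervalIntegrable_const hf
      fun x hx => csInf_le hS.bddBelow (hfS x hx)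
  · rw [hconst]
    exact intervalIntegral.integral_mono_on hab hf intervalIntegrable_const
      fun x hx => le_csSup hS.bddAbove (hfS x hx)

namespace IR

theorem sll.le {A B : IR} (h : sll A B) : A ≤ B := ⟨h.1.le, h.2.le⟩

theorem dM_nonneg (A B : IR) : 0 ≤ dM A B := le_max_of_le_left (abs_nonneg _)

theorem continuous_lo : Continuous lo := continuous_fst.comp continuous_subtype_val

theorem continuous_hi : Continuous hi := continuous_snd.comp continuous_subtype_val

theorem dist_le_dM_of_mem_box {C D X Y : IR} (hX : X ∈ box C D) (hY : Y ∈ box C D) :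
    dist X Y ≤ dM C D := by
  rw [Subtype.dist_eq, Prod.dist_eq, dM]
  exact max_le_max
    ((Real.dist_le_of_mem_Icc ⟨hX.1.1, hX.2.1⟩ ⟨hY.1.1, hY.2.1⟩).trans (le_abs_self _))
    ((Real.dist_le_of_mem_Icc ⟨hX.1.2, hX.2.2⟩ ⟨hY.1.2, hY.2.2⟩).trans (le_abs_self _))

theorem isCompact_box (A B : IR) : IsCompact (box A B) :=
  (isClosed_le continuous_fst continuous_snd).isClosedEmbedding_subtypeVal.isCompact_preimage
    (isCompact_Icc (a := A.val) (b := B.val))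

theorem box_subset_box {A B C D : IR} (hC : A ≤ C) (hD : D ≤ B) : box C D ⊆ box A B :=
  fun _ hX => ⟨hC.trans hX.1, hX.2.trans hD⟩

section Segment

variable {A B : IR} {s t : ℝ}

theorem seg_val (ht : t ∈ Icc (0 : ℝ) 1) :
    (seg A B t).val = (lo A + t * (lo B - lo A), hi A + t * (hi B - hi A)) := by
  have hle : lo A + t * (lo B - lo A) ≤ hi A + t * (hi B - hi A) := by
    have hA : lo A ≤ hi A := A.prop
    have hB : lo B ≤ hi B := B.prop
    nlinarith [mul_nonneg (sub_nonneg.2 ht.2) (sub_nonneg.2 hA), mul_nonneg ht.1 (sub_nonneg.2 hB)]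
  simp [seg, mkI, hle]

theorem seg_zero : seg A B 0 = A :=
  Subtype.ext <| by rw [seg_val (left_mem_Icc.2 zero_le_one)]; simp [lo, hi]

theorem seg_one : seg A B 1 = B :=
  Subtype.ext <| by rw [seg_val (right_mem_Icc.2 zero_le_one)]; simp [lo, hi]

theorem seg_le_seg (hAB : A ≤ B) (hs : s ∈ Icc (0 : ℝ) 1) (ht : t ∈ Icc (0 : ℝ) 1)
    (hst : s ≤ t) : seg A B s ≤ seg A B t := by
  have hlo : lo A ≤ lo B := hAB.1
  have hhi : hi A ≤ hi B := hAB.2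
  show (seg A B s).val ≤ (seg A B t).val
  rw [seg_val hs, seg_val ht]
  constructor <;> dsimp only <;> gcongr

theorem seg_mem_box (hAB : A ≤ B) (ht : t ∈ Icc (0 : ℝ) 1) : seg A B t ∈ box A B := by
  constructor
  · simpa only [seg_zero] using seg_le_seg hAB (left_mem_Icc.2 zero_le_one) ht ht.1
  · simpa only [seg_one] using seg_le_seg hAB ht (right_mem_Icc.2 zero_le_one) ht.2

theorem dM_seg_seg (hs : s ∈ Icc (0 : ℝ) 1) (ht : t ∈ Icc (0 : ℝ) 1) :
    dM (seg A B s) (seg A B t) = |t - s| * dM A B := by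
  simp only [dM, lo, hi, seg_val hs, seg_val ht]
  rw [mul_max_of_nonneg _ _ (abs_nonneg _), ← abs_mul, ← abs_mul]
  congr 2 <;> ring

theorem continuousOn_seg : ContinuousOn (seg A B) (Icc 0 1) :=
  Topology.IsInducing.subtypeVal.continuousOn_iff.2 <| (by fun_prop : Continuous fun t : ℝ =>
    (lo A + t * (lo B - lo A), hi A + t * (hi B - hi A))).continuousOn.congr
      fun _ ht => seg_val ht

theorem mkI_spectrum_eq_seg (h : lo A < lo B) (x : ℝ) :
    mkI x (hi A + ((hi B - hi A) / (lo B - lo A)) * (x - lo A)) =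
      seg A B ((x - lo A) / (lo B - lo A)) := by
  have hne : lo B - lo A ≠ 0 := (sub_pos.2 h).ne'
  unfold seg
  congr 1
  · field_simp; ring
  · ring

theorem integral_comp_mkI_spectrum (h : lo A < lo B) (g : IR → ℝ) :
    ∫ x in lo A..lo B, g (mkI x (hi A + ((hi B - hi A) / (lo B - lo A)) * (x - lo A))) =
      (lo B - lo A) * ∫ t in (0 : ℝ)..1, g (seg A B t) := by
  have hne : lo B - lo A ≠ 0 := (sub_pos.2 h).ne'
  simp_rw [mkI_spectrum_eq_seg h, sub_div]
  rw [intervalIntegral.integral_comp_div_sub (fun t => g (seg A B t)) hne, sub_self,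
    ← sub_div, div_self hne, smul_eq_mul]

end Segment

namespace Partition

variable (P : Partition)

theorem t_mono {i j : ℕ} (hij : i ≤ j) (hj : j ≤ P.n) : P.t i ≤ P.t j := by
  induction j, hij using Nat.le_induction with
  | base => exact le_rfl
  | succ j _ ih => exact (ih (by omega)).trans (P.mono j (by omega)).le

theorem t_mem_Icc {k : ℕ} (hk : k ≤ P.n) : P.t k ∈ Icc (0 : ℝ) 1 :=
  ⟨P.t0 ▸ P.t_mono k.zero_le hk, P.tn ▸ P.t_mono hk le_rfl⟩

theorem sum_sub_t : ∑ k ∈ Finset.range P.n, (P.t (k + 1) - P.t k) = 1 := by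
  rw [Finset.sum_range_sub, P.tn, P.t0, sub_zero]

noncomputable def uniform (n : ℕ) (hn : 0 < n) : Partition where
  n := n
  npos := hn
  t i := i / n
  t0 := by simp
  tn := div_self (by positivity)
  mono i _ := by gcongr; simp

instance : Nonempty Partition := ⟨uniform 1 one_pos⟩

end Partition

section RiemannSums

variable {A B : IR} {g : IR → ℝ} {s t : ℝ}

theorem box_seg_subset (hAB : A ≤ B) (hs : s ∈ Icc (0 : ℝ) 1) (ht : t ∈ Icc (0 : ℝ) 1) :
    box (seg A B s) (seg A B t) ⊆ box A B :=
  box_subset_box (seg_mem_box hAB hs).1 (seg_mem_box hAB ht).2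

theorem isBounded_image_box_seg (hAB : A ≤ B) (hg : ContinuousOn g (box A B))
    (hs : s ∈ Icc (0 : ℝ) 1) (ht : t ∈ Icc (0 : ℝ) 1) :
    Bornology.IsBounded (g '' box (seg A B s) (seg A B t)) :=
  ((isCompact_box A B).image_of_continuousOn hg).isBounded.subset
    (image_mono (box_seg_subset hAB hs ht))

theorem continuousOn_comp_seg (hAB : A ≤ B) (hg : ContinuousOn g (box A B)) :
    ContinuousOn (fun t => g (seg A B t)) (Icc 0 1) :=
  hg.comp continuousOn_seg fun _ ht => seg_mem_box hAB ht

theorem dM_mul_csInf_le_integral_and_integral_le_dM_mul_csSup (hAB : A ≤ B)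
    (hg : ContinuousOn g (box A B)) (hs : s ∈ Icc (0 : ℝ) 1) (ht : t ∈ Icc (0 : ℝ) 1)
    (hst : s ≤ t) :
    dM (seg A B s) (seg A B t) * sInf (g '' box (seg A B s) (seg A B t)) ≤
        dM A B * ∫ r in s..t, g (seg A B r) ∧
      dM A B * ∫ r in s..t, g (seg A B r) ≤
        dM (seg A B s) (seg A B t) * sSup (g '' box (seg A B s) (seg A B t)) := by
  have hmem : ∀ r ∈ Icc s t, g (seg A B r) ∈ g '' box (seg A B s) (seg A B t) := by
    intro r hr
    have hr' : r ∈ Icc (0 : ℝ) 1 := ⟨hs.1.trans hr.1, hr.2.trans ht.2⟩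
    exact mem_image_of_mem g ⟨seg_le_seg hAB hs hr' hr.1, seg_le_seg hAB hr' ht hr.2⟩
  obtain ⟨hlow, hupp⟩ := mul_csInf_le_integral_and_integral_le_mul_csSup hst
    (((continuousOn_comp_seg hAB hg).mono (Icc_subset_Icc hs.1 ht.2)).intervalIntegrable_of_Icc
      hst) (isBounded_image_box_seg hAB hg hs ht) hmem
  rw [dM_seg_seg hs ht, abs_of_nonneg (sub_nonneg.2 hst), mul_comm (t - s), mul_assoc, mul_assoc]
  exact ⟨mul_le_mul_of_nonneg_left hlow (dM_nonneg A B),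
    mul_le_mul_of_nonneg_left hupp (dM_nonneg A B)⟩

noncomputable def scalarLowerSum (A B : IR) (g : IR → ℝ) (P : Partition) : ℝ :=
  ∑ k ∈ Finset.range P.n, dM (seg A B (P.t k)) (seg A B (P.t (k + 1))) *
    sInf (g '' box (seg A B (P.t k)) (seg A B (P.t (k + 1))))

noncomputable def scalarUpperSum (A B : IR) (g : IR → ℝ) (P : Partition) : ℝ :=
  ∑ k ∈ Finset.range P.n, dM (seg A B (P.t k)) (seg A B (P.t (k + 1))) *
    sSup (g '' box (seg A B (P.t k)) (seg A B (P.t (k + 1))))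

theorem lowerSum_eq (A B : IR) (F : IR → IR) (P : Partition) :
    lowerSum A B F P =
      (scalarLowerSum A B (fun X => lo (F X)) P, scalarLowerSum A B (fun X => hi (F X)) P) := by
  simp only [lowerSum, scalarLowerSum, infS, Prod.ext_iff, Prod.fst_sum, Prod.snd_sum,
    Prod.smul_fst, Prod.smul_snd, smul_eq_mul, image_image, and_self]

theorem upperSum_eq (A B : IR) (F : IR → IR) (P : Partition) :
    upperSum A B F P =
      (scalarUpperSum A B (fun X => lo (F X)) P, scalarUpperSum A B (fun X => hi (F X)) P) := by
  simp only [upperSum, scalarUpperSum, supS, Prod.ext_iff, Prod.fst_sum, Prod.snd_sum,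
    Prod.smul_fst, Prod.smul_snd, smul_eq_mul, image_image, and_self]

theorem dM_seg_t_succ (P : Partition) {k : ℕ} (hk : k < P.n) :
    dM (seg A B (P.t k)) (seg A B (P.t (k + 1))) = (P.t (k + 1) - P.t k) * dM A B := by
  rw [dM_seg_seg (P.t_mem_Icc hk.le) (P.t_mem_Icc hk), abs_of_nonneg (sub_nonneg.2 (P.mono k hk).le)]

theorem scalarLowerSum_le_and_le_scalarUpperSum (hAB : A ≤ B) (hg : ContinuousOn g (box A B))
    (P : Partition) :
    scalarLowerSum A B g P ≤ dM A B * ∫ t in (0 : ℝ)..1, g (seg A B t) ∧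
      dM A B * ∫ t in (0 : ℝ)..1, g (seg A B t) ≤ scalarUpperSum A B g P := by
  have hsplit : ∫ t in (0 : ℝ)..1, g (seg A B t) =
      ∑ k ∈ Finset.range P.n, ∫ t in P.t k..P.t (k + 1), g (seg A B t) := by
    rw [intervalIntegral.sum_integral_adjacent_intervals, P.t0, P.tn]
    exact fun k hk => ((continuousOn_comp_seg hAB hg).mono (Icc_subset_Icc
      (P.t_mem_Icc hk.le).1 (P.t_mem_Icc hk).2)).intervalIntegrable_of_Icc (P.mono k hk).le
  rw [hsplit, Finset.mul_sum]
  have hcell (k : ℕ) (hk : k ∈ Finset.range P.n) :=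
    have hk : k < P.n := Finset.mem_range.1 hk
    dM_mul_csInf_le_integral_and_integral_le_dM_mul_csSup hAB hg (P.t_mem_Icc hk.le)
      (P.t_mem_Icc hk) (P.mono k hk).le
  exact ⟨Finset.sum_le_sum fun k hk => (hcell k hk).1,
    Finset.sum_le_sum fun k hk => (hcell k hk).2⟩

theorem scalarUpperSum_sub_scalarLowerSum_le (P : Partition) {ε : ℝ}
    (hosc : ∀ k < P.n, sSup (g '' box (seg A B (P.t k)) (seg A B (P.t (k + 1)))) -
      sInf (g '' box (seg A B (P.t k)) (seg A B (P.t (k + 1)))) ≤ ε) :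
    scalarUpperSum A B g P - scalarLowerSum A B g P ≤ ε * dM A B := by
  calc scalarUpperSum A B g P - scalarLowerSum A B g P
      = ∑ k ∈ Finset.range P.n, dM (seg A B (P.t k)) (seg A B (P.t (k + 1))) *
          (sSup (g '' box (seg A B (P.t k)) (seg A B (P.t (k + 1)))) -
            sInf (g '' box (seg A B (P.t k)) (seg A B (P.t (k + 1))))) := by
        simp only [scalarUpperSum, scalarLowerSum, ← Finset.sum_sub_distrib, mul_sub]
    _ ≤ ∑ k ∈ Finset.range P.n, (P.t (k + 1) - P.t k) * dM A B * ε := by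
        refine Finset.sum_le_sum fun k hk => ?_
        rw [Finset.mem_range] at hk
        rw [dM_seg_t_succ P hk]
        exact mul_le_mul_of_nonneg_left (hosc k hk)
          (mul_nonneg (sub_nonneg.2 (P.mono k hk).le) (dM_nonneg A B))
    _ = ε * dM A B := by rw [← Finset.sum_mul, ← Finset.sum_mul, P.sum_sub_t]; ring

theorem exists_scalarUpperSum_sub_scalarLowerSum_le (hAB : A ≤ B)
    (hg : ContinuousOn g (box A B)) {ε : ℝ} (hε : 0 < ε) :
    ∃ P, scalarUpperSum A B g P - scalarLowerSum A B g P ≤ ε * dM A B := by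
  obtain ⟨δ, hδ, hgδ⟩ := Metric.uniformContinuousOn_iff.1
    ((isCompact_box A B).uniformContinuousOn_of_continuous hg) ε hε
  obtain ⟨n, hn⟩ := exists_nat_gt (dM A B / δ)
  have hn0 : (0 : ℝ) < n := (div_nonneg (dM_nonneg A B) hδ.le).trans_lt hn
  let P := Partition.uniform n (by exact_mod_cast hn0)
  refine ⟨P, scalarUpperSum_sub_scalarLowerSum_le P fun k hk => ?_⟩
  have hs := P.t_mem_Icc hk.le
  have ht := P.t_mem_Icc hk
  have hmesh : dM (seg A B (P.t k)) (seg A B (P.t (k + 1))) < δ := by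
    rw [dM_seg_t_succ P hk, show P.t (k + 1) - P.t k = 1 / n by
      simp only [P, Partition.uniform]; push_cast; ring, one_div_mul_eq_div, div_lt_iff₀' hn0]
    exact (div_lt_iff₀ hδ).1 hn
  rw [← Real.diam_eq (isBounded_image_box_seg hAB hg hs ht)]
  refine Metric.diam_le_of_forall_dist_le hε.le ?_
  simp only [forall_mem_image]
  exact fun X hX Y hY => (hgδ X (box_seg_subset hAB hs ht hX) Y (box_seg_subset hAB hs ht hY)
    ((dist_le_dM_of_mem_box hX hY).trans_lt hmesh)).le

theorem csSup_scalarLowerSum_eq_and_csInf_scalarUpperSum_eq (h : sll A B)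
    (hg : ContinuousOn g (box A B)) :
    sSup (range (scalarLowerSum A B g)) = dM A B * ∫ t in (0 : ℝ)..1, g (seg A B t) ∧
      sInf (range (scalarUpperSum A B g)) = dM A B * ∫ t in (0 : ℝ)..1, g (seg A B t) := by
  have hdM : 0 < dM A B := (sub_pos.2 h.1).trans_le ((le_abs_self _).trans (le_max_left _ _))
  refine csSup_range_eq_and_csInf_range_eq_of_sub_le
    (fun P => (scalarLowerSum_le_and_le_scalarUpperSum h.le hg P).1)
    (fun P => (scalarLowerSum_le_and_le_scalarUpperSum h.le hg P).2) fun ε hε => ?_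
  obtain ⟨P, hP⟩ := exists_scalarUpperSum_sub_scalarLowerSum_le h.le hg (div_pos hε hdM)
  exact ⟨P, hP.trans_eq (div_mul_cancel₀ ε hdM.ne')⟩

end RiemannSums

end IR

open IR in
/-- Let `A ≪ B` and `F : 𝕀_{[A,B]} → 𝕀ℝ` be continuous w.r.t. the Moore
metric.  Then both the lower and the upper integral of `F` equal
`[∫_{a̲}^{b̲} F_l, ∫_{a̲}^{b̲} F_r] · (d_M(A,B)/(b̲−a̲))`. -/
theorem IR.lower_upper_int_eq_spectra (A B : IR) (h : sll A B) (F : IR → IR)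
    (hF : ContinuousOn F (box A B)) :
    lowerInt A B F =
      (dM A B / (lo B - lo A)) •
        ((∫ x in lo A..lo B, specL A B F x), (∫ x in lo A..lo B, specR A B F x)) ∧
    upperInt A B F =
      (dM A B / (lo B - lo A)) •
        ((∫ x in lo A..lo B, specL A B F x), (∫ x in lo A..lo B, specR A B F x)) := by
  obtain ⟨hlower₁, hupper₁⟩ :=
    csSup_scalarLowerSum_eq_and_csInf_scalarUpperSum_eq h (continuous_lo.comp_continuousOn hF)
  obtain ⟨hlower₂, hupper₂⟩ :=
    csSup_scalarLowerSum_eq_and_csInf_scalarUpperSum_eq h (continuous_hi.comp_continuousOn hF)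
  have hspecL : ∫ x in lo A..lo B, specL A B F x =
      (lo B - lo A) * ∫ t in (0 : ℝ)..1, lo (F (seg A B t)) :=
    integral_comp_mkI_spectrum h.1 fun X => lo (F X)
  have hspecR : ∫ x in lo A..lo B, specR A B F x =
      (lo B - lo A) * ∫ t in (0 : ℝ)..1, hi (F (seg A B t)) :=
    integral_comp_mkI_spectrum h.1 fun X => hi (F X)
  have hscale (I : ℝ) : dM A B / (lo B - lo A) * ((lo B - lo A) * I) = dM A B * I := by
    field_simp [(sub_pos.2 h.1).ne']
  simp only [lowerInt, upperInt, lowerSum_eq, upperSum_eq, Prod.smul_mk, smul_eq_mul,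
    hspecL, hspecR, hscale]
  exact ⟨Prod.ext hlower₁ hlower₂, Prod.ext hupper₁ hupper₂⟩
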